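/- Let M be a model category with pushouts, and let ℕ denote the poset of natural numbers with its usual order, viewed as a category. Then the functor category Fun(ℕ, M) admits a model category structure in which a map f : X ⟶ Y is: a weak equivalence (resp. fibration) iff each component f_n : X_n → Y_n is a weak equivalence (resp. fibration) in M; and a cofibration iff f_0 : X_0 → Y_0 is a cofibration and for every n the corner map X_{n+1} ⊔_{X_n} Y_n → Y_{n+1} is a cofibration. Moreover, in this model structure an object X is cofibrant if and only if X_0 is cofibrant and every structure map X_n → X_{n+1} is a cofibration; and the constant-diagram functor const : M ⥤ Fun(ℕ, M) preserves fibrations and trivial fibrations, so that if M has sequential colimits then the adjunction colim : Fun(ℕ, M) ⇄ M : const is a Quillen adjunction. -/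

import Mathlib

open CategoryTheory Limits

universe w v u

namespace Paper

/-- `f` is a retract of `g` in the arrow category. -/
def IsRetract {M : Type u} [Category.{v} M] {a b x y : M} (f : a ⟶ b) (g : x ⟶ y) : Prop :=
  ∃ (i : a ⟶ x) (r : x ⟶ a) (i' : b ⟶ y) (r' : y ⟶ b),
    i ≫ r = 𝟙 a ∧ i' ≫ r' = 𝟙 b ∧ i ≫ g = f ≫ i' ∧ g ≫ r' = r ≫ f

/-- A (Quillen) model structure on a category `M`: classes of weak equivalences,
cofibrations and fibrations, containing all isomorphisms, with the two-out-of-three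
property for weak equivalences, all three classes closed under retracts, the lifting
axioms, and the two factorization axioms. -/
structure ModelStructure (M : Type u) [Category.{v} M] where
  W : MorphismProperty M
  Cof : MorphismProperty M
  Fib : MorphismProperty M
  iso_W : MorphismProperty.isomorphisms M ≤ W
  iso_Cof : MorphismProperty.isomorphisms M ≤ Cof
  iso_Fib : MorphismProperty.isomorphisms M ≤ Fib
  two_of_three : W.HasTwoOutOfThreeProperty
  retract_W : ∀ {a b x y : M} (f : a ⟶ b) (g : x ⟶ y), IsRetract f g → W g → W f
  retract_Cof : ∀ {a b x y : M} (f : a ⟶ b) (g : x ⟶ y), IsRetract f g → Cof g → Cof f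
  retract_Fib : ∀ {a b x y : M} (f : a ⟶ b) (g : x ⟶ y), IsRetract f g → Fib g → Fib f
  lift_Cof_trivFib : ∀ {a b x y : M} (i : a ⟶ b) (p : x ⟶ y),
    Cof i → W p → Fib p → HasLiftingProperty i p
  lift_trivCof_Fib : ∀ {a b x y : M} (i : a ⟶ b) (p : x ⟶ y),
    Cof i → W i → Fib p → HasLiftingProperty i p
  fact_Cof_trivFib : ∀ {x y : M} (f : x ⟶ y),
    ∃ (z : M) (i : x ⟶ z) (p : z ⟶ y), Cof i ∧ W p ∧ Fib p ∧ i ≫ p = f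
  fact_trivCof_Fib : ∀ {x y : M} (f : x ⟶ y),
    ∃ (z : M) (i : x ⟶ z) (p : z ⟶ y), Cof i ∧ W i ∧ Fib p ∧ i ≫ p = f

variable {M : Type u} [Category.{v} M]

/-- An object is cofibrant if the map from the initial object to it is a cofibration. -/
def ModelStructure.Cofibrant [HasInitial M] (S : ModelStructure M) (x : M) : Prop :=
  S.Cof (initial.to x)

/-- An object is fibrant if the map from it to the terminal object is a fibration. -/
def ModelStructure.Fibrant [HasTerminal M] (S : ModelStructure M) (x : M) : Prop :=
  S.Fib (terminal.from x)

end Paper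

namespace Paper

variable {M : Type u} [Category.{v} M]

/-- For a map `f : X ⟶ Y` of `ℕ`-indexed diagrams in `M` and `n : ℕ`, the corner map
`X_{n+1} ⊔_{X_n} Y_n ⟶ Y_{n+1}` induced by the naturality square of `f` at `n → n+1`. -/
noncomputable def seqCorner [HasPushouts M] {X Y : ℕ ⥤ M} (f : X ⟶ Y) (n : ℕ) :
    pushout (X.map (homOfLE (Nat.le_succ n))) (f.app n) ⟶ Y.obj (n + 1) :=
  pushout.desc (f.app (n + 1)) (Y.map (homOfLE (Nat.le_succ n)))
    (f.naturality (homOfLE (Nat.le_succ n)))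

end Paper


/-!
Weak equivalences and fibrations are levelwise, and a Reedy cofibration is controlled one level
at a time, so lifts and factorizations are built by induction on `n`. Given a lift at level `n` of
a square from a Reedy cofibration `i` to a levelwise map `p`, the lift at level `n + 1` solves the
lifting problem of the corner map of `i` at `n` against `p (n + 1)`; dually, the stage `n + 1` of a
factorization of `f` comes from factoring the map `X (n + 1) ⊔_{X n} Z n ⟶ Y (n + 1)`.
The (trivial) cofibrations of `M` are exactly the maps with the left lifting property against the
trivial fibrations (resp. the fibrations), so they are stable under cobase change and composition.
Hence a Reedy cofibration is a levelwise cofibration, and if it is also a levelwise weak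
equivalence, its corner maps are trivial cofibrations by two-out-of-three. The claims about
`colim ⊣ const` follow by adjunction, since `const` sends (trivial) fibrations to levelwise ones.
-/

namespace Paper

open MorphismProperty

variable {M : Type u} [Category.{v} M]

lemma exists_seq_of_step {α : ℕ → Sort*} (P : ∀ n, α n → Prop)
    (R : ∀ n, α n → α (n + 1) → Prop) (a₀ : α 0) (h₀ : P 0 a₀)
    (step : ∀ n a, P n a → ∃ b, P (n + 1) b ∧ R n a b) :
    ∃ g : ∀ n, α n, g 0 = a₀ ∧ (∀ n, P n (g n)) ∧ ∀ n, R n (g n) (g (n + 1)) := by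
  choose next hnext hR using step
  let g : ∀ n, {a : α n // P n a} :=
    fun n => Nat.rec ⟨a₀, h₀⟩ (fun n a => ⟨next n a.1 a.2, hnext n a.1 a.2⟩) n
  exact ⟨fun n => (g n).1, rfl, fun n => (g n).2, fun n => hR n _ (g n).2⟩

lemma IsRetract.of_retractArrow {a b x y : M} {f : a ⟶ b} {g : x ⟶ y}
    (h : RetractArrow f g) : IsRetract f g :=
  ⟨h.i.left, h.r.left, h.i.right, h.r.right, Arrow.hom.congr_left h.retract,
    Arrow.hom.congr_right h.retract, h.i.w, h.r.w.symm⟩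

lemma IsRetract.app {X Y A B : ℕ ⥤ M} {f : X ⟶ Y} {g : A ⟶ B} (h : IsRetract f g)
    (n : ℕ) : IsRetract (f.app n) (g.app n) := by
  obtain ⟨i, r, i', r', hi, hi', hg, hr⟩ := h
  exact ⟨i.app n, r.app n, i'.app n, r'.app n, by simp [← NatTrans.comp_app, hi],
    by simp [← NatTrans.comp_app, hi'], by simp [← NatTrans.comp_app, hg],
    by simp [← NatTrans.comp_app, hr]⟩

namespace ModelStructure

variable (S : ModelStructure M)

lemma cof_eq_llp : S.Cof = (S.W ⊓ S.Fib).llp := by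
  refine le_antisymm (fun _ _ i hi _ _ p hp => S.lift_Cof_trivFib i p hi hp.1 hp.2)
    fun _ _ f hf => ?_
  obtain ⟨_, i, p, hi, hpW, hpF, fac⟩ := S.fact_Cof_trivFib f
  have := hf p ⟨hpW, hpF⟩
  exact S.retract_Cof f i (.of_retractArrow (.ofLeftLiftingProperty fac)) hi

lemma cof_inf_W_eq_llp : S.Cof ⊓ S.W = S.Fib.llp := by
  refine le_antisymm (fun _ _ i hi _ _ p hp => S.lift_trivCof_Fib i p hi.1 hi.2 hp)
    fun _ _ f hf => ?_
  obtain ⟨_, i, p, hiC, hiW, hp, fac⟩ := S.fact_trivCof_Fib f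
  have := hf p hp
  have hr := IsRetract.of_retractArrow (.ofLeftLiftingProperty fac)
  exact ⟨S.retract_Cof f i hr hiC, S.retract_W f i hr hiW⟩

instance : S.Cof.IsStableUnderCobaseChange := S.cof_eq_llp ▸ inferInstance

instance : S.Cof.IsMultiplicative := S.cof_eq_llp ▸ inferInstance

instance : (S.Cof ⊓ S.W).IsStableUnderCobaseChange := S.cof_inf_W_eq_llp ▸ inferInstance

instance : (S.Cof ⊓ S.W).IsMultiplicative := S.cof_inf_W_eq_llp ▸ inferInstance

instance : HasFactorization S.Cof (S.W ⊓ S.Fib) where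
  nonempty_mapFactorizationData f := by
    obtain ⟨Z, i, p, hi, hpW, hpF, fac⟩ := S.fact_Cof_trivFib f
    exact ⟨{ Z, i, p, fac, hi, hp := ⟨hpW, hpF⟩ }⟩

instance : HasFactorization (S.Cof ⊓ S.W) S.Fib where
  nonempty_mapFactorizationData f := by
    obtain ⟨Z, i, p, hiC, hiW, hp, fac⟩ := S.fact_trivCof_Fib f
    exact ⟨{ Z, i, p, fac, hi := ⟨hiC, hiW⟩, hp }⟩

end ModelStructure

variable [HasPushouts M]

@[simp]
lemma inl_seqCorner {X Y : ℕ ⥤ M} (f : X ⟶ Y) (n : ℕ) :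
    pushout.inl _ _ ≫ seqCorner f n = f.app (n + 1) :=
  pushout.inl_desc _ _ _

@[simp]
lemma inr_seqCorner {X Y : ℕ ⥤ M} (f : X ⟶ Y) (n : ℕ) :
    pushout.inr _ _ ≫ seqCorner f n = Y.map (homOfLE (Nat.le_succ n)) :=
  pushout.inr_desc _ _ _

lemma isIso_seqCorner {X Y : ℕ ⥤ M} (f : X ⟶ Y) [IsIso f] (n : ℕ) :
    IsIso (seqCorner f n) := by
  have h : IsPushout (X.map (homOfLE (Nat.le_succ n))) (f.app n)
      (f.app (n + 1)) (Y.map (homOfLE (Nat.le_succ n))) :=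
    (IsPushout.of_horiz_isIso ⟨(f.naturality _).symm⟩).flip
  have : seqCorner f n = h.isoPushout.inv := by
    ext <;> simp
  rw [this]
  infer_instance

lemma IsRetract.seqCorner {X Y A B : ℕ ⥤ M} {f : X ⟶ Y} {g : A ⟶ B} (h : IsRetract f g)
    (n : ℕ) : IsRetract (seqCorner f n) (seqCorner g n) := by
  obtain ⟨i, r, i', r', hi, hi', hg, hr⟩ := h
  have hi := congr_app hi
  have hi' := congr_app hi'
  have hg := congr_app hg
  have hr := congr_app hr
  simp only [NatTrans.comp_app, NatTrans.id_app] at hi hi' hg hr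
  refine ⟨pushout.desc (i.app _ ≫ pushout.inl _ _) (i'.app n ≫ pushout.inr _ _) ?_,
    pushout.desc (r.app _ ≫ pushout.inl _ _) (r'.app n ≫ pushout.inr _ _) ?_,
    i'.app (n + 1), r'.app (n + 1), ?_, hi' (n + 1), ?_, ?_⟩
  · rw [i.naturality_assoc, pushout.condition, reassoc_of% hg]
  · rw [r.naturality_assoc, pushout.condition, ← reassoc_of% hr]
  -- `simp` would rewrite `n.succ` (from `Nat.le_succ` in `seqCorner`) to `n + 1` inside
  -- dependent types and then fail to match; the pushout lemmas are applied by hand.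
  all_goals apply pushout.hom_ext <;> simp only [pushout.inl_desc_assoc, pushout.inr_desc_assoc,
    pushout.inl_desc, pushout.inr_desc, inl_seqCorner, inr_seqCorner, reassoc_of% inl_seqCorner,
    reassoc_of% inr_seqCorner, Category.assoc]
  · simp [reassoc_of% hi]
  · simp [reassoc_of% hi']
  · exact hg _
  · exact (i'.naturality _).symm
  · exact hr _
  · exact r'.naturality _

def seqReedy (P : MorphismProperty M) : MorphismProperty (ℕ ⥤ M) :=
  fun _ _ f => P (f.app 0) ∧ ∀ n, P (seqCorner f n)

lemma seqReedy_monotone : Monotone (seqReedy (M := M)) :=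
  fun _ _ h _ _ _ hf => ⟨h _ hf.1, fun n => h _ (hf.2 n)⟩

lemma isomorphisms_le_seqReedy {P : MorphismProperty M} (hP : isomorphisms M ≤ P) :
    isomorphisms (ℕ ⥤ M) ≤ seqReedy P := fun _ _ f (_ : IsIso f) =>
  ⟨hP _ (inferInstanceAs (IsIso (f.app 0))), fun n => hP _ (isIso_seqCorner f n)⟩

lemma seqReedy_le_functorCategory (P : MorphismProperty M) [P.IsStableUnderCobaseChange]
    [P.IsStableUnderComposition] : seqReedy P ≤ P.functorCategory ℕ := by
  intro X Y f hf n
  induction n with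
  | zero => exact hf.1
  | succ n ih =>
    rw [← inl_seqCorner]
    exact P.comp_mem _ _ (P.pushout_inl _ _ ih) (hf.2 n)

lemma exists_lift_app_succ {A B X Y : ℕ ⥤ M} {i : A ⟶ B} {p : X ⟶ Y} {u : A ⟶ X} {v : B ⟶ Y}
    (sq : CommSq u i p v) (n : ℕ) [HasLiftingProperty (seqCorner i n) (p.app (n + 1))]
    (l : B.obj n ⟶ X.obj n) (hl : i.app n ≫ l = u.app n ∧ l ≫ p.app n = v.app n) :
    ∃ l' : B.obj (n + 1) ⟶ X.obj (n + 1),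
      (i.app (n + 1) ≫ l' = u.app (n + 1) ∧ l' ≫ p.app (n + 1) = v.app (n + 1)) ∧
        B.map (homOfLE (Nat.le_succ n)) ≫ l' = l ≫ X.map (homOfLE (Nat.le_succ n)) := by
  have w : A.map (homOfLE (Nat.le_succ n)) ≫ u.app (n + 1) =
      i.app n ≫ l ≫ X.map (homOfLE (Nat.le_succ n)) := by
    rw [u.naturality, reassoc_of% hl.1]
  have sq' : CommSq (pushout.desc _ _ w) (seqCorner i n) (p.app (n + 1)) (v.app (n + 1)) := by
    constructor
    apply pushout.hom_ext
    · simpa only [pushout.inl_desc_assoc, reassoc_of% inl_seqCorner, ← NatTrans.comp_app]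
        using congr_app sq.w (n + 1)
    · simp only [pushout.inr_desc_assoc, reassoc_of% inr_seqCorner, Category.assoc,
        p.naturality, reassoc_of% hl.2, v.naturality]
  refine ⟨sq'.lift, ⟨?_, sq'.fac_right⟩, ?_⟩
  · rw [← inl_seqCorner, Category.assoc, sq'.fac_left, pushout.inl_desc]
  · rw [← inr_seqCorner, Category.assoc, sq'.fac_left, pushout.inr_desc]

lemma seqReedy_llp_le_llp_functorCategory (T : MorphismProperty M) :
    seqReedy T.llp ≤ (T.functorCategory ℕ).llp := by
  intro A B i hi X Y p hp
  refine ⟨fun {u v} sq => ?_⟩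
  have := hi.1 _ (hp 0)
  have := fun n => hi.2 n _ (hp (n + 1))
  have sq₀ : CommSq (u.app 0) (i.app 0) (p.app 0) (v.app 0) := sq.map ((evaluation ℕ M).obj 0)
  obtain ⟨l, -, hl, hnat⟩ := exists_seq_of_step
    (fun n l => i.app n ≫ l = u.app n ∧ l ≫ p.app n = v.app n)
    (fun n l l' => B.map (homOfLE (Nat.le_succ n)) ≫ l' = l ≫ X.map (homOfLE (Nat.le_succ n)))
    sq₀.lift ⟨sq₀.fac_left, sq₀.fac_right⟩ fun n l hl => exists_lift_app_succ sq n l hl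
  exact ⟨⟨{ l := NatTrans.ofSequence l hnat
            fac_left := by ext n; exact (hl n).1
            fac_right := by ext n; exact (hl n).2 }⟩⟩

/- The stages are factorizations of `f.app n` whose first map is unconstrained: at level `n + 1`
the property `P` is carried by the corner map `c`, not by `b.i = pushout.inl ≫ c`. -/
lemma exists_factorization_app_succ (P Q : MorphismProperty M) [HasFactorization P Q]
    {X Y : ℕ ⥤ M} (f : X ⟶ Y) (n : ℕ) (a : MapFactorizationData ⊤ Q (f.app n)) :
    ∃ b : MapFactorizationData ⊤ Q (f.app (n + 1)),
      ∃ c : pushout (X.map (homOfLE (Nat.le_succ n))) a.i ⟶ b.Z, P c ∧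
        pushout.inl _ _ ≫ c = b.i ∧
          pushout.inr _ _ ≫ c ≫ b.p = a.p ≫ Y.map (homOfLE (Nat.le_succ n)) := by
  have w : X.map (homOfLE (Nat.le_succ n)) ≫ f.app (n + 1) =
      a.i ≫ a.p ≫ Y.map (homOfLE (Nat.le_succ n)) := by
    rw [f.naturality, a.fac_assoc]
  let d := factorizationData P Q (pushout.desc _ _ w)
  refine ⟨{ Z := d.Z, i := pushout.inl _ _ ≫ d.i, p := d.p, fac := ?_,
            hi := trivial, hp := d.hp }, d.i, d.hi, rfl, ?_⟩
  · rw [Category.assoc, d.fac]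
    exact pushout.inl_desc _ _ _
  · dsimp only
    rw [d.fac]
    exact pushout.inr_desc _ _ _

instance hasFactorization_seqReedy (P Q : MorphismProperty M) [HasFactorization P Q] :
    HasFactorization (seqReedy P) (Q.functorCategory ℕ) where
  nonempty_mapFactorizationData {X Y} f := by
    let a₀ := factorizationData P Q (f.app 0)
    obtain ⟨g, hg₀, -, hg⟩ := exists_seq_of_step (fun _ _ => True)
      (fun n (a : MapFactorizationData ⊤ Q (f.app n)) b =>
        ∃ c : pushout (X.map (homOfLE (Nat.le_succ n))) a.i ⟶ b.Z, P c ∧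
          pushout.inl _ _ ≫ c = b.i ∧
            pushout.inr _ _ ≫ c ≫ b.p = a.p ≫ Y.map (homOfLE (Nat.le_succ n)))
      { a₀ with hi := trivial } trivial
      fun n a _ => (exists_factorization_app_succ P Q f n a).imp fun _ h => ⟨trivial, h⟩
    choose c hc hinl hinr using hg
    let Z := Functor.ofSequence fun n => pushout.inr _ _ ≫ c n
    let i : X ⟶ Z := NatTrans.ofSequence (fun n => (g n).i) fun n => by
      rw [Functor.ofSequence_map_homOfLE_succ, ← hinl n]
      exact pushout.condition_assoc _
    let p : Z ⟶ Y := NatTrans.ofSequence (fun n => (g n).p) fun n => by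
      rw [Functor.ofSequence_map_homOfLE_succ]
      exact (Category.assoc _ _ _).trans (hinr n)
    have hcorner (n : ℕ) : seqCorner i n = c n := by
      apply pushout.hom_ext
      · exact (inl_seqCorner i n).trans (hinl n).symm
      · exact (inr_seqCorner i n).trans (Functor.ofSequence_map_homOfLE_succ _ n)
    refine ⟨{ Z, i, p, fac := ?_, hi := ⟨?_, fun n => hcorner n ▸ hc n⟩,
              hp := fun n => (g n).hp }⟩
    · ext n
      exact (g n).fac
    · change P (g 0).i
      rw [hg₀]
      exact a₀.hi

lemma ModelStructure.seqReedy_cof_inf_W (S : ModelStructure M) {X Y : ℕ ⥤ M} {f : X ⟶ Y}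
    (hf : seqReedy S.Cof f) (hW : S.W.functorCategory ℕ f) : seqReedy (S.Cof ⊓ S.W) f := by
  refine ⟨⟨hf.1, hW 0⟩, fun n => ⟨hf.2 n, ?_⟩⟩
  have := S.two_of_three
  have hinl : S.W (pushout.inl (X.map (homOfLE (Nat.le_succ n))) (f.app n)) :=
    ((S.Cof ⊓ S.W).pushout_inl _ _ ⟨seqReedy_le_functorCategory S.Cof _ hf n, hW n⟩).2
  exact S.W.of_precomp _ _ hinl ((inl_seqCorner f n).symm ▸ hW (n + 1))

lemma seqReedy_initial_to_iff [HasInitial M] (P : MorphismProperty M) [P.RespectsIso]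
    (X : ℕ ⥤ M) : seqReedy P (initial.to X) ↔
      P (initial.to (X.obj 0)) ∧ ∀ n, P (X.map (homOfLE (Nat.le_succ n))) := by
  have hinit (n : ℕ) : IsInitial ((⊥_ (ℕ ⥤ M)).obj n) :=
    initialIsInitial.isInitialObj ((evaluation ℕ M).obj n) _
  refine and_congr (P.arrow_mk_iso_iff (Arrow.isoMk ((hinit 0).uniqueUpToIso initialIsInitial)
    (Iso.refl _) ((hinit 0).hom_ext _ _))) (forall_congr' fun n => ?_)
  have := isIso_of_isInitial (hinit n) (hinit (n + 1))
    ((⊥_ (ℕ ⥤ M)).map (homOfLE (Nat.le_succ n)))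
  exact P.arrow_mk_iso_iff (Arrow.isoMk (asIso (pushout.inr _ _)).symm (Iso.refl _)
    (by simp [IsIso.inv_comp_eq]))

lemma llp_colim_map [HasColimitsOfShape ℕ M] (T : MorphismProperty M) {X Y : ℕ ⥤ M}
    {f : X ⟶ Y} (hf : seqReedy T.llp f) : T.llp (colim.map f) := fun _ _ q hq =>
  (colimConstAdj.hasLiftingProperty_iff f q).2
    (seqReedy_llp_le_llp_functorCategory T f hf _ fun _ => hq)

def ModelStructure.reedy (S : ModelStructure M) : ModelStructure (ℕ ⥤ M) where
  W := S.W.functorCategory ℕ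
  Cof := seqReedy S.Cof
  Fib := S.Fib.functorCategory ℕ
  iso_W _ _ f (_ : IsIso f) n := S.iso_W _ (inferInstanceAs (IsIso (f.app n)))
  iso_Cof := isomorphisms_le_seqReedy S.iso_Cof
  iso_Fib _ _ f (_ : IsIso f) n := S.iso_Fib _ (inferInstanceAs (IsIso (f.app n)))
  two_of_three :=
    have := S.two_of_three
    { comp_mem := fun f g hf hg n => by simpa using S.W.comp_mem _ _ (hf n) (hg n)
      of_postcomp := fun f g hg hfg n => S.W.of_postcomp _ _ (hg n) (by simpa using hfg n)
      of_precomp := fun f g hf hfg n => S.W.of_precomp _ _ (hf n) (by simpa using hfg n) }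
  retract_W f g h hg n := S.retract_W _ _ (h.app n) (hg n)
  retract_Cof f g h hg :=
    ⟨S.retract_Cof _ _ (h.app 0) hg.1, fun n => S.retract_Cof _ _ (h.seqCorner n) (hg.2 n)⟩
  retract_Fib f g h hg n := S.retract_Fib _ _ (h.app n) (hg n)
  lift_Cof_trivFib i p hi hW hF :=
    seqReedy_llp_le_llp_functorCategory _ _ (seqReedy_monotone S.cof_eq_llp.le _ hi) p
      fun n => ⟨hW n, hF n⟩
  lift_trivCof_Fib i p hi hW hF :=
    seqReedy_llp_le_llp_functorCategory _ _
      (seqReedy_monotone S.cof_inf_W_eq_llp.le _ (S.seqReedy_cof_inf_W hi hW)) p hF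
  fact_Cof_trivFib f :=
    let d := factorizationData (seqReedy S.Cof) ((S.W ⊓ S.Fib).functorCategory ℕ) f
    ⟨d.Z, d.i, d.p, d.hi, fun n => (d.hp n).1, fun n => (d.hp n).2, d.fac⟩
  fact_trivCof_Fib f :=
    let d := factorizationData (seqReedy (S.Cof ⊓ S.W)) (S.Fib.functorCategory ℕ) f
    ⟨d.Z, d.i, d.p, seqReedy_monotone inf_le_left _ d.hi,
      fun n => (seqReedy_le_functorCategory _ _ d.hi n).2, d.hp, d.fac⟩

end Paper

open Paper in
/-- Let `M` be a model category with pushouts and let `ℕ` be the poset of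
natural numbers.  Then `Fun(ℕ, M)` admits a model structure with componentwise weak
equivalences and fibrations, whose cofibrations are the maps `f` with `f_0` a cofibration
and all the corner maps `X_{n+1} ⊔_{X_n} Y_n → Y_{n+1}` cofibrations.  Moreover an object
`X` is cofibrant iff `X_0` is cofibrant and every `X_n → X_{n+1}` is a cofibration, the
constant functor preserves fibrations and trivial fibrations, and if `M` has sequential
colimits then `colim ⊣ const` is a Quillen adjunction. -/
theorem reedy_model_structure_on_sequential_diagrams
    {M : Type u} [Category.{v} M] [HasPushouts M] [HasInitial M]
    [HasColimitsOfShape ℕ M]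
    (S : ModelStructure M) :
    ∃ T : ModelStructure (ℕ ⥤ M),
      (∀ {X Y : ℕ ⥤ M} (f : X ⟶ Y), T.W f ↔ ∀ n, S.W (f.app n)) ∧
      (∀ {X Y : ℕ ⥤ M} (f : X ⟶ Y), T.Fib f ↔ ∀ n, S.Fib (f.app n)) ∧
      (∀ {X Y : ℕ ⥤ M} (f : X ⟶ Y), T.Cof f ↔
        (S.Cof (f.app 0) ∧ ∀ n, S.Cof (seqCorner f n))) ∧
      (∀ X : ℕ ⥤ M, T.Cofibrant X ↔
        (S.Cofibrant (X.obj 0) ∧ ∀ n : ℕ, S.Cof (X.map (homOfLE (Nat.le_succ n))))) ∧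
      (∀ {x y : M} (p : x ⟶ y), S.Fib p → T.Fib ((Functor.const ℕ).map p)) ∧
      (∀ {x y : M} (p : x ⟶ y), S.Fib p → S.W p →
        T.Fib ((Functor.const ℕ).map p) ∧ T.W ((Functor.const ℕ).map p)) ∧
      (∀ {X Y : ℕ ⥤ M} (f : X ⟶ Y), T.Cof f →
        S.Cof ((colim (J := ℕ) (C := M)).map f)) ∧
      (∀ {X Y : ℕ ⥤ M} (f : X ⟶ Y), T.Cof f → T.W f →
        S.Cof ((colim (J := ℕ) (C := M)).map f) ∧
        S.W ((colim (J := ℕ) (C := M)).map f)) := by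
  refine ⟨S.reedy, fun _ => Iff.rfl, fun _ => Iff.rfl, fun _ => Iff.rfl,
    seqReedy_initial_to_iff S.Cof, fun _ hp _ => hp, fun _ hp hW => ⟨fun _ => hp, fun _ => hW⟩,
    fun f hf => ?_, fun f hf hW => ?_⟩
  · exact S.cof_eq_llp.ge _ (llp_colim_map _ (seqReedy_monotone S.cof_eq_llp.le _ hf))
  · exact S.cof_inf_W_eq_llp.ge _
      (llp_colim_map _ (seqReedy_monotone S.cof_inf_W_eq_llp.le _ (S.seqReedy_cof_inf_W hf hW)))
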